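/- arXiv:2012.02075 — 4 statements merged into one kernel-verified Lean document; each statement's English description precedes it below -/
import Mathlib

section
/- Fix r ≥ 1 and a quadratic model (E, A, B, C, Q) over ℂ. Let s_1, …, s_N ∈ ℂ be such that s_ℓE − A, 2s_ℓE − A, and 3s_ℓE − A are invertible for every ℓ, and let V ∈ ℂ^N be a given data vector. Then for every matrix Q ∈ ℂ^{r×r²}, vec(Q)ᵀ·K(s_ℓ)·vec(Q) = H3(s_ℓ) for each ℓ (where H3 and K are formed with this Q in H3, and K depends only on E, A, B, C), and consequently Σ_{ℓ=1}^{N} |H3(s_ℓ) − V_ℓ|² = Σ_{ℓ=1}^{N} |vec(Q)ᵀ·K(s_ℓ)·vec(Q) − V_ℓ|². Hence minimizing Σ_{ℓ=1}^{N} |H3(s_ℓ) − V_ℓ|² over Q ∈ ℂ^{r×r²} is equivalent to minimizing Σ_{ℓ=1}^{N} |vec(Q)ᵀ·K(s_ℓ)·vec(Q) − V_ℓ|² over vec(Q) ∈ ℂ^{r³}. -/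
open Matrix Finset

noncomputable section

/-- Kronecker product of two vectors in `ℂ^r`, indexed by pairs. -/
def kron {r : ℕ} (v w : Fin r → ℂ) : Fin r × Fin r → ℂ := fun p => v p.1 * w p.2

/-- Vectorization of `Q ∈ ℂ^{r × r²}`: `vec(Q)_{((i,j),k)} = Q_{k,(i,j)}`. -/
def vecQ {r : ℕ} (Q : Matrix (Fin r) (Fin r × Fin r) ℂ) : (Fin r × Fin r) × Fin r → ℂ :=
  fun p => Q p.2 p.1

/-- Resolvent `Φ(s) = (sE − A)⁻¹`. -/
def Phi {r : ℕ} (E A : Matrix (Fin r) (Fin r) ℂ) (s : ℂ) : Matrix (Fin r) (Fin r) ℂ :=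
  (s • E - A)⁻¹

/-- `G1(s) = Φ(s)B`. -/
def G1 {r : ℕ} (E A : Matrix (Fin r) (Fin r) ℂ) (B : Fin r → ℂ) (s : ℂ) : Fin r → ℂ :=
  (Phi E A s).mulVec B

/-- `J1(s) = CΦ(s)` (a row vector). -/
def J1 {r : ℕ} (E A : Matrix (Fin r) (Fin r) ℂ) (C : Fin r → ℂ) (s : ℂ) : Fin r → ℂ :=
  Matrix.vecMul C (Phi E A s)

/-- Second transfer function `H2(s) = J1(2s)·Q·(G1(s)⊗G1(s))`. -/
def H2 {r : ℕ} (E A : Matrix (Fin r) (Fin r) ℂ) (B C : Fin r → ℂ)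
    (Q : Matrix (Fin r) (Fin r × Fin r) ℂ) (s : ℂ) : ℂ :=
  J1 E A C (2 * s) ⬝ᵥ Q.mulVec (kron (G1 E A B s) (G1 E A B s))

/-- `G2(s) = Φ(2s)·Q·(G1(s)⊗G1(s))`. -/
def G2 {r : ℕ} (E A : Matrix (Fin r) (Fin r) ℂ) (B : Fin r → ℂ)
    (Q : Matrix (Fin r) (Fin r × Fin r) ℂ) (s : ℂ) : Fin r → ℂ :=
  (Phi E A (2 * s)).mulVec (Q.mulVec (kron (G1 E A B s) (G1 E A B s)))

/-- Third transfer function `H3(s) = 2·J1(3s)·Q·(G2(s)⊗G1(s))`. -/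
def H3 {r : ℕ} (E A : Matrix (Fin r) (Fin r) ℂ) (B C : Fin r → ℂ)
    (Q : Matrix (Fin r) (Fin r × Fin r) ℂ) (s : ℂ) : ℂ :=
  2 * (J1 E A C (3 * s) ⬝ᵥ Q.mulVec (kron (G2 E A B Q s) (G1 E A B s)))

/-- The matrix `K(s) = 2[(G1(s)⊗G1(s))⊗Φ(2s)ᵀ]⊗G1(s)ᵀ⊗J1(3s)`, given entrywise by
`K(s)_{((i,j),k),((l,m),p)} = 2·G1(s)_i·G1(s)_j·Φ(2s)_{l,k}·G1(s)_m·J1(3s)_p`. -/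
def Kmat {r : ℕ} (E A : Matrix (Fin r) (Fin r) ℂ) (B C : Fin r → ℂ) (s : ℂ) :
    Matrix ((Fin r × Fin r) × Fin r) ((Fin r × Fin r) × Fin r) ℂ :=
  fun x y =>
    2 * G1 E A B s x.1.1 * G1 E A B s x.1.2 * Phi E A (2 * s) y.1.1 x.2 *
      G1 E A B s y.1.2 * J1 E A C (3 * s) y.2


lemma sum4_swap {α β γ δ M : Type*} [Fintype α] [Fintype β] [Fintype γ] [Fintype δ]
    [AddCommMonoid M] (f : α → β → γ → δ → M) :
    ∑ a, ∑ b, ∑ c, ∑ d, f a b c d = ∑ d, ∑ b, ∑ c, ∑ a, f a b c d :=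
  calc ∑ a, ∑ b, ∑ c, ∑ d, f a b c d
      = ∑ a, ∑ b, ∑ d, ∑ c, f a b c d :=
        Finset.sum_congr rfl fun a _ => Finset.sum_congr rfl fun b _ => Finset.sum_comm
    _ = ∑ a, ∑ d, ∑ b, ∑ c, f a b c d :=
        Finset.sum_congr rfl fun a _ => Finset.sum_comm
    _ = ∑ d, ∑ a, ∑ b, ∑ c, f a b c d := Finset.sum_comm
    _ = ∑ d, ∑ b, ∑ a, ∑ c, f a b c d :=
        Finset.sum_congr rfl fun d _ => Finset.sum_comm
    _ = ∑ d, ∑ b, ∑ c, ∑ a, f a b c d :=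
        Finset.sum_congr rfl fun d _ => Finset.sum_congr rfl fun b _ => Finset.sum_comm

lemma key_abs {r : ℕ} (g j : Fin r → ℂ) (P : Matrix (Fin r) (Fin r) ℂ)
    (Q : Matrix (Fin r) (Fin r × Fin r) ℂ) :
    ∑ x : (Fin r × Fin r) × Fin r, (Q x.2 x.1) *
      ∑ y : (Fin r × Fin r) × Fin r,
        (2 * g x.1.1 * g x.1.2 * P y.1.1 x.2 * g y.1.2 * j y.2) * Q y.2 y.1
    = 2 * ∑ p, j p * ∑ lm : Fin r × Fin r, Q p lm *
        ((∑ k, P lm.1 k * (∑ ij : Fin r × Fin r, Q k ij * (g ij.1 * g ij.2))) * g lm.2) := by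
  have hT : ∀ k : Fin r, True := fun _ => trivial
  set T : Fin r → ℂ := fun k => ∑ y : (Fin r × Fin r) × Fin r,
      2 * P y.1.1 k * g y.1.2 * j y.2 * Q y.2 y.1 with hTdef
  have hL : ∑ x : (Fin r × Fin r) × Fin r, (Q x.2 x.1) *
      ∑ y : (Fin r × Fin r) × Fin r,
        (2 * g x.1.1 * g x.1.2 * P y.1.1 x.2 * g y.1.2 * j y.2) * Q y.2 y.1
      = ∑ k, (∑ ij : Fin r × Fin r, Q k ij * (g ij.1 * g ij.2)) * T k := by
    rw [Fintype.sum_prod_type, Finset.sum_comm]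
    refine Finset.sum_congr rfl fun k _ => ?_
    rw [hTdef]
    simp only [Finset.sum_mul, Finset.mul_sum]
    conv_rhs => rw [Finset.sum_comm]
    apply Finset.sum_congr rfl
    intro ij _
    apply Finset.sum_congr rfl
    intro y _
    ring
  rw [hL, hTdef]
  simp only [Fintype.sum_prod_type, Finset.mul_sum, Finset.sum_mul]
  rw [sum4_swap]
  refine Finset.sum_congr rfl fun a _ => ?_
  refine Finset.sum_congr rfl fun b _ => ?_
  refine Finset.sum_congr rfl fun c _ => ?_
  refine Finset.sum_congr rfl fun d _ => ?_
  apply Finset.sum_congr rfl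
  intro e _
  apply Finset.sum_congr rfl
  intro f _
  ring


lemma key_id {r : ℕ} (E A : Matrix (Fin r) (Fin r) ℂ) (B C : Fin r → ℂ)
    (Q : Matrix (Fin r) (Fin r × Fin r) ℂ) (t : ℂ) :
    vecQ Q ⬝ᵥ (Kmat E A B C t *ᵥ vecQ Q) = H3 E A B C Q t := by
  simp only [dotProduct, mulVec, Kmat, vecQ, H3, G2, kron]
  exact key_abs (G1 E A B t) (J1 E A C (3 * t)) (Phi E A (2 * t)) Q

/-- fitting the quadratic operator from samples of the third transfer
function is a quadratic least-squares problem in `vec(Q)`. -/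
theorem stmt_1 {r N : ℕ} (hr : 1 ≤ r)
    (E A : Matrix (Fin r) (Fin r) ℂ) (B C : Fin r → ℂ)
    (s : Fin N → ℂ)
    (hs1 : ∀ ℓ, IsUnit (s ℓ • E - A).det)
    (hs2 : ∀ ℓ, IsUnit ((2 * s ℓ) • E - A).det)
    (hs3 : ∀ ℓ, IsUnit ((3 * s ℓ) • E - A).det)
    (V : Fin N → ℂ) :
    (∀ Q : Matrix (Fin r) (Fin r × Fin r) ℂ,
      (∀ ℓ, vecQ Q ⬝ᵥ (Kmat E A B C (s ℓ) *ᵥ vecQ Q) = H3 E A B C Q (s ℓ)) ∧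
      ∑ ℓ, ‖H3 E A B C Q (s ℓ) - V ℓ‖ ^ 2
        = ∑ ℓ, ‖vecQ Q ⬝ᵥ (Kmat E A B C (s ℓ) *ᵥ vecQ Q) - V ℓ‖ ^ 2) ∧
    (⨅ Q : Matrix (Fin r) (Fin r × Fin r) ℂ, ∑ ℓ, ‖H3 E A B C Q (s ℓ) - V ℓ‖ ^ 2)
      = ⨅ v : (Fin r × Fin r) × Fin r → ℂ,
          ∑ ℓ, ‖v ⬝ᵥ (Kmat E A B C (s ℓ) *ᵥ v) - V ℓ‖ ^ 2 := by
  constructor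
  · intro Q
    refine ⟨fun ℓ => key_id E A B C Q (s ℓ), ?_⟩
    exact Finset.sum_congr rfl fun ℓ _ => by rw [key_id]
  · have hsurj : Function.Surjective (vecQ (r := r)) := by
      intro v
      exact ⟨fun k ij => v (ij, k), rfl⟩
    have h1 : ∀ Q : Matrix (Fin r) (Fin r × Fin r) ℂ,
        ∑ ℓ, ‖H3 E A B C Q (s ℓ) - V ℓ‖ ^ 2
          = ∑ ℓ, ‖vecQ Q ⬝ᵥ (Kmat E A B C (s ℓ) *ᵥ vecQ Q) - V ℓ‖ ^ 2 :=
      fun Q => Finset.sum_congr rfl fun ℓ _ => by rw [key_id]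
    calc (⨅ Q : Matrix (Fin r) (Fin r × Fin r) ℂ, ∑ ℓ, ‖H3 E A B C Q (s ℓ) - V ℓ‖ ^ 2)
        = ⨅ Q : Matrix (Fin r) (Fin r × Fin r) ℂ,
            ∑ ℓ, ‖vecQ Q ⬝ᵥ (Kmat E A B C (s ℓ) *ᵥ vecQ Q) - V ℓ‖ ^ 2 := by
          exact congrArg _ (funext h1)
      _ = ⨅ v : (Fin r × Fin r) × Fin r → ℂ,
            ∑ ℓ, ‖v ⬝ᵥ (Kmat E A B C (s ℓ) *ᵥ v) - V ℓ‖ ^ 2 :=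
          hsurj.iInf_comp
            (fun v => ∑ ℓ, ‖v ⬝ᵥ (Kmat E A B C (s ℓ) *ᵥ v) - V ℓ‖ ^ 2)
end
end

section
/- Fix r ≥ 1 and a quadratic model (E, A, B, C, Q) over ℂ, and let s ∈ ℂ be such that sE − A, 2sE − A, and 3sE − A are invertible. Then the third transfer function is a quadratic form in the vectorized quadratic operator: vec(Q)ᵀ · K(s) · vec(Q) = H3(s), where K(s) depends only on E, A, B, C (not on Q). -/
open Matrix Finset

noncomputable section

/-- Auxiliary: `u k = (Q·(g⊗g))_k`. -/
def uAux {r : ℕ} (E A : Matrix (Fin r) (Fin r) ℂ) (B : Fin r → ℂ)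
    (Q : Matrix (Fin r) (Fin r × Fin r) ℂ) (s : ℂ) : Fin r → ℂ :=
  fun k => ∑ q : Fin r × Fin r, Q k q * (G1 E A B s q.1 * G1 E A B s q.2)

/-- Auxiliary: `T k = ∑_{(l,m),p} Φ(2s)_{l,k} g_m J_p Q_{p,(l,m)}`. -/
def TAux {r : ℕ} (E A : Matrix (Fin r) (Fin r) ℂ) (B C : Fin r → ℂ)
    (Q : Matrix (Fin r) (Fin r × Fin r) ℂ) (s : ℂ) : Fin r → ℂ :=
  fun k => ∑ y : (Fin r × Fin r) × Fin r,
    Phi E A (2 * s) y.1.1 k * (G1 E A B s y.1.2 * (J1 E A C (3 * s) y.2 * Q y.2 y.1))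

/-- `H3(s)` is the quadratic form `vec(Q)ᵀ·K(s)·vec(Q)`, where `K(s)`
depends only on `E, A, B, C` and not on `Q`. -/
theorem stmt_6 {r : ℕ} (hr : 1 ≤ r)
    (E A : Matrix (Fin r) (Fin r) ℂ) (B C : Fin r → ℂ)
    (Q : Matrix (Fin r) (Fin r × Fin r) ℂ) (s : ℂ)
    (hs1 : IsUnit (s • E - A).det)
    (hs2 : IsUnit ((2 * s) • E - A).det)
    (hs3 : IsUnit ((3 * s) • E - A).det) :
    vecQ Q ⬝ᵥ (Kmat E A B C s *ᵥ vecQ Q) = H3 E A B C Q s := by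
  classical
  have hu : Q.mulVec (kron (G1 E A B s) (G1 E A B s)) = uAux E A B Q s := by
    funext k
    simp [Matrix.mulVec, dotProduct, kron, uAux]
  have hL : vecQ Q ⬝ᵥ (Kmat E A B C s *ᵥ vecQ Q)
      = 2 * ∑ k, uAux E A B Q s k * TAux E A B C Q s k := by
    simp only [dotProduct, Matrix.mulVec, Kmat, vecQ, uAux, TAux, Finset.mul_sum,
      Finset.sum_mul]
    rw [Fintype.sum_prod_type, Finset.sum_comm]
    conv_rhs => enter [2, k]; rw [Finset.sum_comm]
    refine Finset.sum_congr rfl fun k _ => Finset.sum_congr rfl fun q _ =>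
      Finset.sum_congr rfl fun y _ => by ring
  have hR : H3 E A B C Q s
      = 2 * ∑ k, uAux E A B Q s k * TAux E A B C Q s k := by
    rw [H3, show G2 E A B Q s = (Phi E A (2 * s)).mulVec (uAux E A B Q s) from by
      rw [G2, hu]]
    simp only [dotProduct, Matrix.mulVec, kron, TAux, Fintype.sum_prod_type,
      Finset.mul_sum, Finset.sum_mul]
    conv_lhs => enter [2, p, 2, l]; rw [Finset.sum_comm]
    conv_lhs => enter [2, p]; rw [Finset.sum_comm]
    rw [Finset.sum_comm]
    conv_rhs => enter [2, k, 2, l]; rw [Finset.sum_comm]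
    conv_rhs => enter [2, k]; rw [Finset.sum_comm]
    refine Finset.sum_congr rfl fun k _ => Finset.sum_congr rfl fun p _ =>
      Finset.sum_congr rfl fun l _ => Finset.sum_congr rfl fun m _ => by ring
  rw [hL, hR]
end
end

section
/- Let k ≥ 1 and let λ_1,…,λ_k, μ_1,…,μ_k ∈ ℂ satisfy μ_i ≠ λ_j for all i, j, with data values w_1,…,w_k, v_1,…,v_k ∈ ℂ. Let 𝕃 and 𝕃_s be the Loewner and shifted Loewner matrices, 𝕍 ∈ ℂ^k the column vector with entries v_i, and 𝕎 ∈ ℂ^{1×k} the row vector with entries w_j. Fix an index l ∈ {1,…,k} and assume the matrix 𝕃_s − λ_l·𝕃 is invertible. Then the transfer function of the raw Loewner model (E, A, B, C) = (−𝕃, −𝕃_s, 𝕍, 𝕎) interpolates the right data at λ_l: H(λ_l) := 𝕎·(𝕃_s − λ_l·𝕃)⁻¹·𝕍 = w_l. -/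
open Matrix Finset

noncomputable section

/-- The Loewner matrix `𝕃_{ij} = (v_i − w_j)/(μ_i − λ_j)`. -/
def LoewnerMatrix {k : ℕ} (lam mu w v : Fin k → ℂ) : Matrix (Fin k) (Fin k) ℂ :=
  fun i j => (v i - w j) / (mu i - lam j)

/-- The shifted Loewner matrix `(𝕃_s)_{ij} = (μ_i·v_i − λ_j·w_j)/(μ_i − λ_j)`. -/
def shiftedLoewnerMatrix {k : ℕ} (lam mu w v : Fin k → ℂ) : Matrix (Fin k) (Fin k) ℂ :=
  fun i j => (mu i * v i - lam j * w j) / (mu i - lam j)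

/-- Entrywise, `(μ_i v_i − λ_l w_l − λ_l (v_i − w_l)) / (μ_i − λ_l) = v_i`. -/
theorem shiftedLoewnerMatrix_sub_smul_LoewnerMatrix_mulVec_single {k : ℕ}
    (lam mu w v : Fin k → ℂ) (l : Fin k) (hne : ∀ i, mu i ≠ lam l) :
    (shiftedLoewnerMatrix lam mu w v - lam l • LoewnerMatrix lam mu w v) *ᵥ Pi.single l 1 = v := by
  funext i
  have hd : mu i - lam l ≠ 0 := sub_ne_zero.mpr (hne i)
  simp only [mulVec_single_one, col_apply, Matrix.sub_apply, Matrix.smul_apply, shiftedLoewnerMatrix,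
    LoewnerMatrix, smul_eq_mul]
  field_simp
  ring

theorem stmt_12_general {k : ℕ} (lam mu w v : Fin k → ℂ)
    (hne : ∀ i j, mu i ≠ lam j) (l : Fin k)
    (hinv : IsUnit (shiftedLoewnerMatrix lam mu w v - lam l • LoewnerMatrix lam mu w v).det) :
    w ⬝ᵥ (shiftedLoewnerMatrix lam mu w v - lam l • LoewnerMatrix lam mu w v)⁻¹.mulVec v
      = w l := by
  have := invertibleOfIsUnitDet _ hinv
  have hcol := shiftedLoewnerMatrix_sub_smul_LoewnerMatrix_mulVec_single lam mu w v l (hne · l)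
  rw [inv_mulVec_eq_vec hcol.symm, dotProduct_single_one]

/-- the raw Loewner model `(−𝕃, −𝕃_s, 𝕍, 𝕎)` interpolates the right data:
`H(λ_l) = 𝕎·(𝕃_s − λ_l·𝕃)⁻¹·𝕍 = w_l`. -/
theorem stmt_12 {k : ℕ} (hk : 1 ≤ k) (lam mu w v : Fin k → ℂ)
    (hne : ∀ i j, mu i ≠ lam j) (l : Fin k)
    (hinv : IsUnit (shiftedLoewnerMatrix lam mu w v - lam l • LoewnerMatrix lam mu w v).det) :
    w ⬝ᵥ (shiftedLoewnerMatrix lam mu w v - lam l • LoewnerMatrix lam mu w v)⁻¹.mulVec v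
      = w l :=
  stmt_12_general lam mu w v hne l hinv
end
end

section
/- Let k ≥ 1 and let λ_1,…,λ_k, μ_1,…,μ_k ∈ ℂ satisfy μ_i ≠ λ_j for all i, j, with data values w_1,…,w_k, v_1,…,v_k ∈ ℂ. Let 𝕃 and 𝕃_s be the Loewner and shifted Loewner matrices, 𝕍 ∈ ℂ^k the column vector with entries v_i, and 𝕎 ∈ ℂ^{1×k} the row vector with entries w_j. Fix an index l ∈ {1,…,k} and assume the matrix 𝕃_s − μ_l·𝕃 is invertible. Then the transfer function of the raw Loewner model (E, A, B, C) = (−𝕃, −𝕃_s, 𝕍, 𝕎) interpolates the left data at μ_l: H(μ_l) := 𝕎·(𝕃_s − μ_l·𝕃)⁻¹·𝕍 = v_l. -/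
open Matrix Finset

noncomputable section

/-! The `l`-th row of the pencil `𝕃_s − μ_l·𝕃` is exactly `𝕎`, because in each entry the factor
`μ_l − λ_j` cancels. Hence `𝕎·(𝕃_s − μ_l·𝕃)⁻¹` is the `l`-th unit row vector. -/

theorem Matrix.row_dotProduct_nonsing_inv_mulVec {n R : Type*} [Fintype n] [DecidableEq n]
    [CommRing R] (M : Matrix n n R) (hM : IsUnit M.det) (i : n) (v : n → R) :
    M i ⬝ᵥ M⁻¹ *ᵥ v = v i := by
  change (M *ᵥ (M⁻¹ *ᵥ v)) i = v i
  rw [mulVec_mulVec, mul_nonsing_inv M hM, one_mulVec]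

theorem shiftedLoewnerMatrix_sub_smul_LoewnerMatrix_row {k : ℕ} (lam mu w v : Fin k → ℂ)
    (l : Fin k) (hne : ∀ j, mu l ≠ lam j) :
    (shiftedLoewnerMatrix lam mu w v - mu l • LoewnerMatrix lam mu w v) l = w := by
  funext j
  have hd : mu l - lam j ≠ 0 := sub_ne_zero.mpr (hne j)
  simp only [Matrix.sub_apply, Matrix.smul_apply, LoewnerMatrix, shiftedLoewnerMatrix, smul_eq_mul]
  field_simp
  ring

theorem stmt_13_general {k : ℕ} (lam mu w v : Fin k → ℂ)
    (hne : ∀ i j, mu i ≠ lam j) (l : Fin k)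
    (hinv : IsUnit (shiftedLoewnerMatrix lam mu w v - mu l • LoewnerMatrix lam mu w v).det) :
    w ⬝ᵥ (shiftedLoewnerMatrix lam mu w v - mu l • LoewnerMatrix lam mu w v)⁻¹.mulVec v
      = v l := by
  have h := row_dotProduct_nonsing_inv_mulVec _ hinv l v
  rwa [shiftedLoewnerMatrix_sub_smul_LoewnerMatrix_row lam mu w v l (hne l)] at h

/-- the raw Loewner model `(−𝕃, −𝕃_s, 𝕍, 𝕎)` interpolates the left data:
`H(μ_l) = 𝕎·(𝕃_s − μ_l·𝕃)⁻¹·𝕍 = v_l`. -/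
theorem stmt_13 {k : ℕ} (hk : 1 ≤ k) (lam mu w v : Fin k → ℂ)
    (hne : ∀ i j, mu i ≠ lam j) (l : Fin k)
    (hinv : IsUnit (shiftedLoewnerMatrix lam mu w v - mu l • LoewnerMatrix lam mu w v).det) :
    w ⬝ᵥ (shiftedLoewnerMatrix lam mu w v - mu l • LoewnerMatrix lam mu w v)⁻¹.mulVec v
      = v l :=
  stmt_13_general lam mu w v hne l hinv
end
end
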